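/- arXiv:2201.07553 — 2 statements merged into one kernel-verified Lean document; each statement's English description precedes it below -/
import Mathlib

section
/- Let G be a group of order n and let P be an (n, mk, σ, μ)-partial difference set with σ ≠ μ that is partitioned by a collection S' = {D₁, …, D_m} of m pairwise disjoint k-subsets of G*. Then S' is an (n, m, k, λ)-disjoint difference family if and only if S' is a proper (n, m, k, σ−λ, μ−λ)-external partial difference family. -/
open Finset

section Defs

variable {G : Type*} [AddGroup G] [DecidableEq G]

/-- The multiset of internal differences `x - y` (`x ≠ y`) of a finset. -/
def intDiff (D : Finset G) : Multiset G :=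
  ((D ×ˢ D).filter fun p => p.1 ≠ p.2).val.map fun p => p.1 - p.2

/-- The multiset of external differences `x - y`, `x ∈ D₁`, `y ∈ D₂`. -/
def extDiff (D₁ D₂ : Finset G) : Multiset G :=
  (D₁ ×ˢ D₂).val.map fun p => p.1 - p.2

variable {ι : Type*} [Fintype ι] [DecidableEq ι]

/-- The multiset of all internal differences of a family of sets. -/
def famInt (D : ι → Finset G) : Multiset G := ∑ i, intDiff (D i)

/-- The multiset of all external differences between distinct members of a family of sets. -/
def famExt (D : ι → Finset G) : Multiset G :=
  ∑ i, ∑ j, if j = i then 0 else extDiff (D i) (D j)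

/-- The union of the members of a family of sets. -/
def famU (D : ι → Finset G) : Finset G := Finset.univ.biUnion D

variable [Fintype G]

/-- `D` is an `(n,k,λ)`-difference set: `Δ(D) = λ(G*)`. -/
def IsDS (n k : ℕ) (lam : ℤ) (D : Finset G) : Prop :=
  Fintype.card G = n ∧ D.card = k ∧
    ∀ x : G, ((intDiff D).count x : ℤ) = if x = 0 then 0 else lam

/-- `P` is an `(n,k,λ,μ)`-partial difference set: `Δ(P) = λ(P) + μ(G* \ P)`. -/
def IsPDS (n k : ℕ) (lam mu : ℤ) (P : Finset G) : Prop :=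
  Fintype.card G = n ∧ P.card = k ∧
    ∀ x : G, ((intDiff P).count x : ℤ) =
      if x ∈ P then lam else if x = 0 then 0 else mu

/-- `D` is a family of `m` pairwise disjoint `k`-subsets of a group of order `n`. -/
def FamShape (n m k : ℕ) (D : ι → Finset G) : Prop :=
  Fintype.card G = n ∧ Fintype.card ι = m ∧ (∀ i, (D i).card = k) ∧
    ∀ i j, i ≠ j → Disjoint (D i) (D j)

/-- `(n,m,k,λ)`-disjoint difference family: `⋃ᵢ Δ(Dᵢ) = λ(G*)`. -/
def IsDDF (n m k : ℕ) (lam : ℤ) (D : ι → Finset G) : Prop :=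
  FamShape n m k D ∧
    ∀ x : G, ((famInt D).count x : ℤ) = if x = 0 then 0 else lam

/-- `(n,m,k,λ)`-external difference family: `⋃_{i≠j} Δ(Dᵢ,Dⱼ) = λ(G*)`. -/
def IsEDF (n m k : ℕ) (lam : ℤ) (D : ι → Finset G) : Prop :=
  FamShape n m k D ∧
    ∀ x : G, ((famExt D).count x : ℤ) = if x = 0 then 0 else lam

/-- `(n,m,k,λ,μ)`-disjoint partial difference family:
sets in `G*`, `⋃ᵢ Δ(Dᵢ) = λ(S) + μ(G* \ S)` where `S = ⋃ᵢ Dᵢ`. -/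
def IsDPDF (n m k : ℕ) (lam mu : ℤ) (D : ι → Finset G) : Prop :=
  FamShape n m k D ∧ (∀ i, (0 : G) ∉ D i) ∧
    ∀ x : G, ((famInt D).count x : ℤ) =
      if x ∈ famU D then lam else if x = 0 then 0 else mu

/-- `(n,m,k,λ,μ)`-external partial difference family:
sets in `G*`, `⋃_{i≠j} Δ(Dᵢ,Dⱼ) = λ(S) + μ(G* \ S)` where `S = ⋃ᵢ Dᵢ`. -/
def IsEPDF (n m k : ℕ) (lam mu : ℤ) (D : ι → Finset G) : Prop :=
  FamShape n m k D ∧ (∀ i, (0 : G) ∉ D i) ∧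
    ∀ x : G, ((famExt D).count x : ℤ) =
      if x ∈ famU D then lam else if x = 0 then 0 else mu

end Defs

section FieldDefs

variable {F : Type*} [Field F] [DecidableEq F]

/-- `α` is a primitive element: every nonzero element is a power of `α`. -/
def IsPrimitiveElt (α : F) : Prop := ∀ x : F, x ≠ 0 → ∃ k : ℕ, x = α ^ k

/-- The coset `α^i⟨α^e⟩` of the cyclotomic class of order `e` (of size `f`). -/
def cyclo (α : F) (e f i : ℕ) : Finset F :=
  (Finset.range f).image fun j => α ^ (i + e * j)

/-- The cyclotomic number `(i,j)_e`: the number of pairs `(zᵢ, zⱼ) ∈ Cᵢ × Cⱼ` with `zᵢ + 1 = zⱼ`. -/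
def cycNum (α : F) (e f i j : ℕ) : ℕ :=
  ((cyclo α e f i ×ˢ cyclo α e f j).filter fun p => p.1 + 1 = p.2).card

/-- `Φᵢ = {x ∈ C₀^e : x ≠ 1, x - 1 ∈ α^i C₀^ε}`. -/
def Phi (α : F) (e f ε ρ i : ℕ) : Finset F :=
  (cyclo α e f 0).filter fun x => x ≠ 1 ∧ x - 1 ∈ cyclo α ε ρ i

/-- `φᵢ = |Φᵢ|`. -/
def phi (α : F) (e f ε ρ i : ℕ) : ℕ := (Phi α e f ε ρ i).card

end FieldDefs


/-!
Since the `Dᵢ` are pairwise disjoint, every ordered pair of distinct elements of `S = ⋃ᵢ Dᵢ`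
lies either inside one `Dᵢ` or across two different ones, so `Δ(S) = ⋃ᵢ Δ(Dᵢ) + ⋃_{i≠j} Δ(Dᵢ,Dⱼ)`.
Subtracting `λ(G*)` from the PDS equation `Δ(S) = σ(S) + μ(G* \ S)` (using `0 ∉ S`) turns the
DDF condition into the EPDF condition with parameters `σ - λ`, `μ - λ`, and these differ iff
`σ ≠ μ`.
-/

open Function

lemma filter_ne_product_of_disjoint {α : Type*} [DecidableEq α] {A B : Finset α}
    (h : Disjoint A B) : (A ×ˢ B).filter (fun p => p.1 ≠ p.2) = A ×ˢ B :=
  filter_true_of_mem fun _ hp => h.forall_ne_finset (mem_product.1 hp).1 (mem_product.1 hp).2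

lemma pairwiseDisjoint_product_of_pairwise {α ι : Type*} {D : ι → Finset α}
    (hD : Pairwise (Disjoint on D)) (s : Set (ι × ι)) :
    s.PairwiseDisjoint fun ij => D ij.1 ×ˢ D ij.2 := by
  rintro ⟨i, j⟩ - ⟨k, l⟩ - hne
  by_cases hik : i = k
  · subst hik
    exact disjoint_product.2 (.inr (hD fun hjl => hne (Prod.ext rfl hjl)))
  · exact disjoint_product.2 (.inl (hD hik))

lemma famU_product_famU_eq_disjiUnion {α ι : Type*} [DecidableEq α] [Fintype ι]
    {D : ι → Finset α} (hD : Pairwise (Disjoint on D)) :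
    famU D ×ˢ famU D = univ.disjiUnion (fun ij : ι × ι => D ij.1 ×ˢ D ij.2)
      (pairwiseDisjoint_product_of_pairwise hD _) := by
  ext p
  simp [famU]

section DifferenceMultisets

variable {G ι : Type*} [AddGroup G] [DecidableEq G] [Fintype ι] [DecidableEq ι]

lemma intDiff_famU {D : ι → Finset G} (hD : Pairwise (Disjoint on D)) :
    intDiff (famU D) = famInt D + famExt D := by
  calc intDiff (famU D)
      = ∑ ij : ι × ι, ((D ij.1 ×ˢ D ij.2).filter fun p => p.1 ≠ p.2).val.map
          (fun p => p.1 - p.2) := by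
        rw [intDiff, famU_product_famU_eq_disjiUnion hD, filter_disjiUnion, disjiUnion_val,
          Multiset.map_bind]
        rfl
    _ = ∑ i, ∑ j, if j = i then intDiff (D i) else extDiff (D i) (D j) := by
        rw [Fintype.sum_prod_type]
        refine sum_congr rfl fun i _ => sum_congr rfl fun j _ => ?_
        split_ifs with hji
        · subst hji
          rfl
        · rw [filter_ne_product_of_disjoint (hD (Ne.symm hji))]
          rfl
    _ = famInt D + famExt D := by
        simp only [famInt, famExt, ← sum_add_distrib]
        refine sum_congr rfl fun i _ => ?_
        have hsplit : ∀ j, (if j = i then intDiff (D i) else extDiff (D i) (D j)) =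
            (if j = i then intDiff (D i) else 0) + (if j = i then 0 else extDiff (D i) (D j)) :=
          fun j => by split_ifs <;> simp
        rw [sum_congr rfl fun j _ => hsplit j, sum_add_distrib, sum_ite_eq' univ i,
          if_pos (mem_univ i)]

lemma count_intDiff_famU {D : ι → Finset G} (hD : Pairwise (Disjoint on D)) (x : G) :
    ((intDiff (famU D)).count x : ℤ) = (famInt D).count x + (famExt D).count x := by
  rw [intDiff_famU hD, Multiset.count_add, Nat.cast_add]

end DifferenceMultisets

lemma forall_eq_ite_iff_of_add_eq {α : Type*} [Zero α] [DecidableEq α] {S : Finset α}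
    (h0 : (0 : α) ∉ S) {a b : α → ℤ} {sigma mu lam : ℤ}
    (hab : ∀ x, a x + b x = if x ∈ S then sigma else if x = 0 then 0 else mu) :
    (∀ x, a x = if x = 0 then 0 else lam) ↔
      ∀ x, b x = if x ∈ S then sigma - lam else if x = 0 then 0 else mu - lam := by
  refine ⟨fun ha x => ?_, fun hb x => ?_⟩ <;> have := hab x
  · have := ha x
    split_ifs at * with hxS hx0 <;> first | linarith | exact absurd (hx0 ▸ hxS) h0
  · have := hb x
    split_ifs at * with hx0 hxS <;> first | linarith | exact absurd (hx0 ▸ hxS) h0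

/-- Theorem: if a proper `(n, m*k, σ, μ)`-PDS is partitioned by a family of `m` pairwise
disjoint `k`-subsets of `G*`, then the family is an `(n,m,k,λ)`-DDF iff it is a proper
`(n,m,k,σ-λ,μ-λ)`-EPDF. -/
theorem pds_partition_ddf_iff_proper_epdf {G : Type*} [AddGroup G] [DecidableEq G] [Fintype G]
    (n m k : ℕ) (sigma mu lam : ℤ) (D : Fin m → Finset G)
    (hdisj : ∀ i j, i ≠ j → Disjoint (D i) (D j))
    (hcard : ∀ i, (D i).card = k)
    (hzero : ∀ i, (0 : G) ∉ D i)
    (hproper : sigma ≠ mu)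
    (hPDS : IsPDS n (m * k) sigma mu (famU D)) :
    IsDDF n m k lam D ↔
      (IsEPDF n m k (sigma - lam) (mu - lam) D ∧ sigma - lam ≠ mu - lam) := by
  have h0S : (0 : G) ∉ famU D := by simpa [famU] using hzero
  have hshape : FamShape n m k D := ⟨hPDS.1, Fintype.card_fin m, hcard, hdisj⟩
  have hcounts := forall_eq_ite_iff_of_add_eq h0S (lam := lam)
    fun x => (count_intDiff_famU hdisj x).symm.trans (hPDS.2.2 x)
  constructor
  · rintro ⟨-, hddf⟩
    exact ⟨⟨hshape, hzero, hcounts.1 hddf⟩, fun h => hproper (by linarith)⟩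
  · rintro ⟨⟨-, -, hepdf⟩, -⟩
    exact ⟨hshape, hcounts.2 hepdf⟩
end

section
/- Let q = ef + 1 = ερ + 1 be a prime power with e, f, ε, ρ > 1 and ε | e. (a) Suppose q ≡ 1 (mod 2ε). (i) If C₀^ε is a partial difference set, then it must be proper (in particular C₀^ε cannot be a difference set). (ii) If f is even and C₀^ε′ is a disjoint partial difference family, then it must be proper. Moreover, if ε > 2: (iii) if C₀^ε is a partial difference set then 2 ∈ C₀^ε and −2 ∈ C₀^ε; (iv) if f is even and C₀^ε′ is a disjoint partial difference family then 2 ∈ C₀^ε and −2 ∈ C₀^ε. (b) Suppose q ≡ ε + 1 (mod 2ε) and ε is even. Then: (i) C₀^ε cannot be a proper partial difference set; (ii) if ε < e, then C₀^ε′ cannot be a proper disjoint partial difference family. -/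
open Finset

/-!
For a symmetric set `D` (`-D = D`), the involution `(a, b) ↦ (-b, -a)` preserves differences, and
its fixed points with difference `x ≠ 0` are the pairs `(a, -a)` with `a + a = x`. So in odd
characteristic `x` occurs an odd number of times in `Δ(D)` iff `x / 2 ∈ D`, and likewise for a
family of disjoint symmetric sets and their union.

If `q ≡ 1 (mod 2ε)`, then `ρ` is even, so `-1 ∈ C₀^ε` (and `-1 ∈ C₀^e` when `f` is even) and all
sets involved are symmetric. If `λ = μ`, the multiplicities of `2` and `2α` would agree, but the
first is odd (`1 ∈ C₀^ε`) and the second even (`α ∉ C₀^ε`). If `ε > 2` and `2 ∉ C₀^ε`, then `μ`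
is odd; yet `2α` and `2α²` are not both in the subgroup `C₀^ε` (their quotient is `α`), and
whichever lies outside has multiplicity `μ`, which is even as neither `α` nor `α²` is in `C₀^ε`.

If `q ≡ ε + 1 (mod 2ε)` with `ε` even, then `ρ` is odd, so `1 ∈ C₀^ε` but `-1 ∉ C₀^ε`; as `x`
and `-x` always occur equally often in a difference multiset, `λ = μ`.
-/

section Differences

variable {G : Type*} [AddGroup G] [DecidableEq G]

lemma count_intDiff (D : Finset G) (x : G) :
    (intDiff D).count x = #{p ∈ D ×ˢ D | p.1 ≠ p.2 ∧ p.1 - p.2 = x} := by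
  rw [intDiff, Multiset.count_map, ← filter_val, filter_filter, card_val]
  simp only [eq_comm (a := x)]

lemma count_intDiff_neg (D : Finset G) (x : G) :
    (intDiff D).count (-x) = (intDiff D).count x := by
  have hswap : ∀ y : G, ∀ p ∈ {p ∈ D ×ˢ D | p.1 ≠ p.2 ∧ p.1 - p.2 = y},
      p.swap ∈ {p ∈ D ×ˢ D | p.1 ≠ p.2 ∧ p.1 - p.2 = -y} := by
    intro y p hp
    simp only [mem_filter, mem_product, Prod.fst_swap, Prod.snd_swap] at hp ⊢
    exact ⟨hp.1.symm, Ne.symm hp.2.1, by rw [← neg_sub, hp.2.2]⟩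
  rw [count_intDiff, count_intDiff]
  exact card_nbij' Prod.swap Prod.swap (fun p hp => by simpa using hswap (-x) p hp)
    (fun p hp => hswap x p hp) (fun _ _ => rfl) (fun _ _ => rfl)

variable {ι : Type*} [Fintype ι]

lemma count_famInt_neg (D : ι → Finset G) (x : G) :
    (famInt D).count (-x) = (famInt D).count x := by
  simp only [famInt, Multiset.count_sum', count_intDiff_neg]

variable [Fintype G] {n k m : ℕ} {lam mu : ℤ} {x : G}

lemma IsPDS.lam_eq_mu_of_neg_notMem {P : Finset G} (hP : IsPDS n k lam mu P) (hx : x ∈ P)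
    (hnx : -x ∉ P) : lam = mu := by
  have hx0 : -x ≠ 0 := fun h => hnx (by rwa [h, ← neg_eq_zero.mp h])
  have h := hP.2.2 (-x)
  rw [count_intDiff_neg, hP.2.2 x, if_pos hx, if_neg hnx, if_neg hx0] at h
  exact h

lemma IsDPDF.lam_eq_mu_of_neg_notMem {D : ι → Finset G} (hD : IsDPDF n m k lam mu D)
    (hx : x ∈ famU D) (hnx : -x ∉ famU D) : lam = mu := by
  have hx0 : -x ≠ 0 := fun h => hnx (by rwa [h, ← neg_eq_zero.mp h])
  have h := hD.2.2 (-x)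
  rw [count_famInt_neg, hD.2.2 x, if_pos hx, if_neg hnx, if_neg hx0] at h
  exact h

end Differences

lemma card_cast_zmod_two_eq_card_fixed {β : Type*} [DecidableEq β] (T : Finset β) (σ : β → β)
    (hσT : ∀ a ∈ T, σ a ∈ T) (hσσ : ∀ a ∈ T, σ (σ a) = a) :
    (#T : ZMod 2) = #{a ∈ T | σ a = a} := by
  have hmoved : (#{a ∈ T | σ a ≠ a} : ZMod 2) = 0 := by
    rw [card_eq_sum_ones, Nat.cast_sum, Nat.cast_one]
    refine sum_involution (fun a _ => σ a) (fun _ _ => by decide)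
      (fun a ha _ => (mem_filter.mp ha).2) (fun a ha => ?_) (fun a ha => hσσ a (mem_filter.mp ha).1)
    obtain ⟨haT, hσa⟩ := mem_filter.mp ha
    exact mem_filter.mpr ⟨hσT a haT, by rw [hσσ a haT]; exact hσa.symm⟩
  rw [← card_filter_add_card_filter_not (fun a => σ a = a), Nat.cast_add, hmoved, add_zero]

section Parity

variable {G : Type*} [AddCommGroup G] [DecidableEq G]

lemma count_intDiff_cast_zmod_two {D : Finset G} (hD : ∀ a ∈ D, -a ∈ D) {x : G} (hx : x ≠ 0) :
    ((intDiff D).count x : ZMod 2) = #{a ∈ D | a + a = x} := by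
  rw [count_intDiff, card_cast_zmod_two_eq_card_fixed _ (fun p => (-p.2, -p.1))]
  · congr 1
    refine card_nbij' Prod.fst (fun a => (a, -a)) ?_ ?_ ?_ ?_
    · intro p hp
      simp only [coe_filter, mem_filter, mem_product, Set.mem_ofPred_eq, Prod.ext_iff] at hp ⊢
      obtain ⟨⟨⟨hp1, -⟩, -, hpx⟩, -, hp2⟩ := hp
      rw [← hp2, sub_neg_eq_add] at hpx
      exact ⟨hp1, hpx⟩
    · intro a ha
      simp only [coe_filter, mem_filter, mem_product, Set.mem_ofPred_eq, Prod.ext_iff,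
        neg_neg] at ha ⊢
      refine ⟨⟨⟨ha.1, hD a ha.1⟩, fun h => hx ?_, by rw [sub_neg_eq_add, ha.2]⟩, trivial, trivial⟩
      rw [← ha.2]
      nth_rw 2 [h]
      exact add_neg_cancel a
    · intro p hp
      simp only [coe_filter, Set.mem_ofPred_eq, Prod.ext_iff] at hp
      exact Prod.ext rfl hp.2.2
    · intro a _
      rfl
  · intro p hp
    simp only [mem_filter, mem_product] at hp ⊢
    refine ⟨⟨hD _ hp.1.2, hD _ hp.1.1⟩, fun h => hp.2.1 (neg_inj.mp h).symm, ?_⟩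
    rw [← hp.2.2]
    abel
  · intro p _
    simp

variable {ι : Type*} [Fintype ι]

lemma count_famInt_cast_zmod_two {D : ι → Finset G} (hD : ∀ i, ∀ a ∈ D i, -a ∈ D i)
    (hdisj : ∀ i j, i ≠ j → Disjoint (D i) (D j)) {x : G} (hx : x ≠ 0) :
    ((famInt D).count x : ZMod 2) = #{a ∈ famU D | a + a = x} := by
  rw [famInt, Multiset.count_sum', Nat.cast_sum, famU, filter_biUnion, card_biUnion, Nat.cast_sum]
  · exact sum_congr rfl fun i _ => count_intDiff_cast_zmod_two (hD i) hx
  · intro i _ j _ hij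
    exact disjoint_filter_filter (hdisj i j hij)

end Parity

section DoublingParity

variable {G : Type*} [AddCommGroup G] [DecidableEq G] {U : Finset G} {lam mu : ℤ}

/-- For a PDS or DPDF with union `U`, the multiplicity of `a + a` is `λ` or `μ` according as
`a + a ∈ U`; its parity is fixed by whether the midpoint `a` lies in `U`. -/
def DoublingParity (U : Finset G) (lam mu : ℤ) : Prop :=
  ∀ a : G, a ≠ 0 → ((if a + a ∈ U then lam else mu : ℤ) : ZMod 2) = if a ∈ U then 1 else 0

lemma card_filter_add_self_eq (h2 : Function.Injective fun a : G => a + a) (s : Finset G)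
    (a : G) : #{b ∈ s | b + b = a + a} = if a ∈ s then 1 else 0 := by
  simp_rw [h2.eq_iff]
  rw [filter_eq']
  split_ifs <;> simp

lemma doublingParity_of_count {M : Multiset G} (h2 : Function.Injective fun a : G => a + a)
    (hcount : ∀ x, (M.count x : ℤ) = if x ∈ U then lam else if x = 0 then 0 else mu)
    (hparity : ∀ x, x ≠ 0 → (M.count x : ZMod 2) = #{a ∈ U | a + a = x}) :
    DoublingParity U lam mu := by
  intro a ha
  have haa : a + a ≠ 0 := fun h => ha (h2 (h.trans (add_zero 0).symm))
  have hcount_aa := hcount (a + a)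
  rw [if_neg haa] at hcount_aa
  rw [← hcount_aa, Int.cast_natCast, hparity _ haa, card_filter_add_self_eq h2, Nat.cast_ite,
    Nat.cast_one, Nat.cast_zero]

lemma IsPDS.doublingParity [Fintype G] {n k : ℕ} (hP : IsPDS n k lam mu U)
    (hsymm : ∀ a ∈ U, -a ∈ U) (h2 : Function.Injective fun a : G => a + a) :
    DoublingParity U lam mu :=
  doublingParity_of_count h2 hP.2.2 fun _ => count_intDiff_cast_zmod_two hsymm

lemma IsDPDF.doublingParity [Fintype G] {ι : Type*} [Fintype ι] {n m k : ℕ}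
    {D : ι → Finset G} (hD : IsDPDF n m k lam mu D) (hsymm : ∀ i, ∀ a ∈ D i, -a ∈ D i)
    (h2 : Function.Injective fun a : G => a + a) : DoublingParity (famU D) lam mu :=
  doublingParity_of_count h2 hD.2.2 fun _ => count_famInt_cast_zmod_two hsymm hD.1.2.2.2

lemma DoublingParity.lam_ne_mu (hpar : DoublingParity U lam mu) {a b : G} (ha0 : a ≠ 0)
    (ha : a ∈ U) (hb0 : b ≠ 0) (hb : b ∉ U) : lam ≠ mu := by
  rintro rfl
  have hodd := hpar a ha0
  have heven := hpar b hb0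
  rw [ite_self, if_pos ha] at hodd
  rw [ite_self, if_neg hb] at heven
  exact one_ne_zero (hodd.symm.trans heven)

lemma DoublingParity.add_self_mem (hpar : DoublingParity U lam mu) {a b c : G} (ha0 : a ≠ 0)
    (ha : a ∈ U) (hb0 : b ≠ 0) (hb : b ∉ U) (hc0 : c ≠ 0) (hc : c ∉ U)
    (hbc : b + b ∈ U → c + c ∉ U) : a + a ∈ U := by
  by_contra haa
  have hodd := hpar a ha0
  rw [if_neg haa, if_pos ha] at hodd
  have heven : (mu : ZMod 2) = 0 := by
    by_cases hbb : b + b ∈ U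
    · simpa [hbc hbb, hc] using hpar c hc0
    · simpa [hbb, hb] using hpar b hb0
  exact zero_ne_one (heven.symm.trans hodd)

end DoublingParity

section Cyclotomic

lemma ringChar_ne_two_of_odd_card {F : Type*} [Field F] [Fintype F]
    (h : Odd (Fintype.card F)) : ringChar F ≠ 2 := by
  rw [Ne, FiniteField.even_card_iff_char_two, ← Nat.even_iff]
  exact Nat.not_even_iff_odd.mpr h

lemma add_self_injective {F : Type*} [Field F] (h2 : (2 : F) ≠ 0) :
    Function.Injective fun a : F => a + a := by
  intro a b hab
  simpa [← two_mul, h2] using hab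

variable {F : Type*} [Field F] [DecidableEq F] {α : F} {e f : ℕ}

lemma IsPrimitiveElt.ne_zero [Fintype F] (hα : IsPrimitiveElt α) (hF : 2 < Fintype.card F) :
    α ≠ 0 := by
  rintro rfl
  obtain ⟨x, -, hx⟩ := exists_mem_notMem_of_card_lt_card (s := ({0, 1} : Finset F)) (t := univ)
    ((card_le_two).trans_lt hF)
  obtain ⟨k, rfl⟩ := hα x (by simp_all)
  rcases k with _ | k <;> simp_all

lemma IsPrimitiveElt.orderOf_eq [Fintype F] (hα : IsPrimitiveElt α) (hα0 : α ≠ 0) :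
    orderOf α = Fintype.card F - 1 := by
  have hgen : ∀ u : Fˣ, u ∈ Subgroup.zpowers (Units.mk0 α hα0) := by
    intro u
    obtain ⟨k, hk⟩ := hα u u.ne_zero
    exact ⟨k, Units.ext (by simp [hk])⟩
  rw [← Fintype.card_units, ← Nat.card_eq_fintype_card,
    ← orderOf_eq_card_of_forall_mem_zpowers hgen, ← orderOf_units, Units.val_mk0]

lemma one_mem_cyclo_zero (hf : 0 < f) : (1 : F) ∈ cyclo α e f 0 :=
  mem_image.mpr ⟨0, mem_range.mpr hf, by simp⟩

lemma pow_mem_cyclo (hα : α ^ (e * f) = 1) (hf : 0 < f) (c m : ℕ) :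
    α ^ (c + e * m) ∈ cyclo α e f c := by
  refine mem_image.mpr ⟨m % f, mem_range.mpr (Nat.mod_lt m hf), ?_⟩
  rw [pow_add, pow_add, pow_mul, pow_mul, ← pow_eq_pow_mod m (by rwa [← pow_mul])]

lemma mul_mem_cyclo (hα : α ^ (e * f) = 1) {u a : F} {c : ℕ} (hu : u ∈ cyclo α e f 0)
    (ha : a ∈ cyclo α e f c) : u * a ∈ cyclo α e f c := by
  obtain ⟨j, hj, rfl⟩ := mem_image.mp hu
  obtain ⟨k, -, rfl⟩ := mem_image.mp ha
  convert pow_mem_cyclo hα (Nat.zero_lt_of_lt (mem_range.mp hj)) c (j + k) using 1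
  rw [← pow_add]
  ring_nf

lemma mem_cyclo_zero_iff (hα : IsPrimitiveElt α) (hord : orderOf α = e * f) (hf : 0 < f) {x : F} :
    x ∈ cyclo α e f 0 ↔ x ^ f = 1 := by
  have hα1 : α ^ (e * f) = 1 := hord ▸ pow_orderOf_eq_one α
  constructor
  · intro hx
    obtain ⟨j, -, rfl⟩ := mem_image.mp hx
    rw [← pow_mul, zero_add, mul_right_comm, pow_mul, hα1, one_pow]
  · intro hx
    obtain ⟨k, rfl⟩ := hα x (by rintro rfl; simp [hf.ne'] at hx)
    rw [← pow_mul, ← orderOf_dvd_iff_pow_eq_one, hord] at hx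
    obtain ⟨m, rfl⟩ := Nat.dvd_of_mul_dvd_mul_right hf hx
    simpa using pow_mem_cyclo hα1 hf 0 m

lemma neg_mem_cyclo (hα : IsPrimitiveElt α) (hord : orderOf α = e * f) (hf : Even f) {a : F}
    {c : ℕ} (ha : a ∈ cyclo α e f c) : -a ∈ cyclo α e f c := by
  obtain ⟨j, hj, -⟩ := mem_image.mp ha
  have hf0 : 0 < f := Nat.zero_lt_of_lt (mem_range.mp hj)
  rw [neg_eq_neg_one_mul]
  exact mul_mem_cyclo (hord ▸ pow_orderOf_eq_one α)
    ((mem_cyclo_zero_iff hα hord hf0).mpr hf.neg_one_pow) ha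

lemma pow_notMem_cyclo_zero (hα : IsPrimitiveElt α) (hord : orderOf α = e * f) (hf : 0 < f)
    {k : ℕ} (hk0 : k ≠ 0) (hke : k < e) : α ^ k ∉ cyclo α e f 0 := by
  rw [mem_cyclo_zero_iff hα hord hf, ← pow_mul]
  exact pow_ne_one_of_lt_orderOf (by positivity) (hord ▸ Nat.mul_lt_mul_of_pos_right hke hf)

lemma cyclo_subset_cyclo_zero {ε ρ : ℕ} (hα : IsPrimitiveElt α) (hord : orderOf α = ε * ρ)
    (hρ : 0 < ρ) (hε : ε ∣ e) (i : ℕ) : cyclo α e f (ε * i) ⊆ cyclo α ε ρ 0 := by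
  intro x hx
  obtain ⟨j, -, rfl⟩ := mem_image.mp hx
  obtain ⟨d, rfl⟩ := hε
  rw [mem_cyclo_zero_iff hα hord hρ, ← pow_mul,
    show (ε * i + ε * d * j) * ρ = ε * ρ * (i + d * j) by ring, pow_mul, ← hord,
    pow_orderOf_eq_one, one_pow]

lemma neg_one_notMem_cyclo_zero (hα : IsPrimitiveElt α) (hord : orderOf α = e * f) (hf : Odd f)
    (hchar : ringChar F ≠ 2) : (-1 : F) ∉ cyclo α e f 0 := by
  rw [mem_cyclo_zero_iff hα hord hf.pos, hf.neg_one_pow]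
  exact Ring.neg_one_ne_one_of_char_ne_two hchar

lemma famU_cyclo_subset_cyclo_zero {ε ρ m : ℕ} (hα : IsPrimitiveElt α) (hord : orderOf α = ε * ρ)
    (hρ : 0 < ρ) (hε : ε ∣ e) :
    famU (fun i : Fin m => cyclo α e f (ε * (i : ℕ))) ⊆ cyclo α ε ρ 0 :=
  biUnion_subset.mpr fun i _ => cyclo_subset_cyclo_zero hα hord hρ hε i

lemma one_mem_famU_cyclo {ε m : ℕ} (hm : 0 < m) (hf : 0 < f) :
    (1 : F) ∈ famU (fun i : Fin m => cyclo α e f (ε * (i : ℕ))) :=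
  mem_biUnion.mpr ⟨⟨0, hm⟩, mem_univ _, by simpa using one_mem_cyclo_zero hf⟩

lemma two_mem_cyclo_zero_of_parity {ε ρ : ℕ} (hα : IsPrimitiveElt α) (hα0 : α ≠ 0)
    (hord : orderOf α = ε * ρ) (hρ : 0 < ρ) (hε : 2 < ε) {U : Finset F} {lam mu : ℤ}
    (hUS : U ⊆ cyclo α ε ρ 0) (h1 : 1 ∈ U)
    (hpar : DoublingParity U lam mu) : (2 : F) ∈ cyclo α ε ρ 0 := by
  have hαS : α ∉ cyclo α ε ρ 0 := by
    simpa using pow_notMem_cyclo_zero hα hord hρ one_ne_zero (by omega)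
  have hα2S : α * α ∉ cyclo α ε ρ 0 := by
    simpa [sq] using pow_notMem_cyclo_zero hα hord hρ two_ne_zero hε
  have hbc : α + α ∈ U → α * α + α * α ∉ U := by
    intro hb hc
    have hb' := (mem_cyclo_zero_iff hα hord hρ).mp (hUS hb)
    have hc' := (mem_cyclo_zero_iff hα hord hρ).mp (hUS hc)
    rw [show α * α + α * α = α * (α + α) by ring, mul_pow, hb', mul_one] at hc'
    exact hαS ((mem_cyclo_zero_iff hα hord hρ).mpr hc')
  have h11 : (1 : F) + 1 ∈ U := hpar.add_self_mem one_ne_zero h1 hα0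
    (notMem_mono hUS hαS) (mul_ne_zero hα0 hα0) (notMem_mono hUS hα2S) hbc
  exact hUS (one_add_one_eq_two (R := F) ▸ h11)

end Cyclotomic

lemma even_of_mul_add_one_mod_two_mul_eq_one {ε ρ : ℕ} (hε : 0 < ε)
    (h : (ε * ρ + 1) % (2 * ε) = 1) : Even ρ := by
  have hdiv := Nat.div_add_mod (ε * ρ + 1) (2 * ε)
  rw [h] at hdiv
  have hρ : ε * ρ = ε * (2 * ((ε * ρ + 1) / (2 * ε))) := by linarith
  exact ⟨_, (Nat.eq_of_mul_eq_mul_left hε hρ).trans (two_mul _)⟩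

lemma odd_of_mul_add_one_mod_two_mul_eq_add_one {ε ρ : ℕ} (hε : 0 < ε)
    (h : (ε * ρ + 1) % (2 * ε) = ε + 1) : Odd ρ := by
  have hdiv := Nat.div_add_mod (ε * ρ + 1) (2 * ε)
  rw [h] at hdiv
  have hρ : ε * ρ = ε * (2 * ((ε * ρ + 1) / (2 * ε)) + 1) := by linarith
  exact ⟨_, Nat.eq_of_mul_eq_mul_left hε hρ⟩

theorem proper_pds_dpdf_congruence_conditions_general {F : Type*} [Field F] [Fintype F] [DecidableEq F]
    (q e f eps rho : ℕ) (α : F)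
    (hq : Fintype.card F = q) (hα : IsPrimitiveElt α)
    (hef : q = e * f + 1)
    (herho : q = eps * rho + 1) (hepse : eps ∣ e) (heps : 1 < eps) :
    (q % (2 * eps) = 1 →
      ((∀ lam mu : ℤ, IsPDS q rho lam mu (cyclo α eps rho 0) → lam ≠ mu) ∧
       (Even f → ∀ lam mu : ℤ,
          IsDPDF q (e / eps) f lam mu
            (fun i : Fin (e / eps) => cyclo α e f (eps * (i : ℕ))) → lam ≠ mu) ∧
       (2 < eps → ∀ lam mu : ℤ, IsPDS q rho lam mu (cyclo α eps rho 0) →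
          (2 : F) ∈ cyclo α eps rho 0 ∧ (-2 : F) ∈ cyclo α eps rho 0) ∧
       (2 < eps → Even f → ∀ lam mu : ℤ,
          IsDPDF q (e / eps) f lam mu
            (fun i : Fin (e / eps) => cyclo α e f (eps * (i : ℕ))) →
          (2 : F) ∈ cyclo α eps rho 0 ∧ (-2 : F) ∈ cyclo α eps rho 0))) ∧
    (q % (2 * eps) = eps + 1 → Even eps →
      ((∀ lam mu : ℤ, IsPDS q rho lam mu (cyclo α eps rho 0) → lam = mu) ∧
       (eps < e → ∀ lam mu : ℤ,
          IsDPDF q (e / eps) f lam mu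
            (fun i : Fin (e / eps) => cyclo α e f (eps * (i : ℕ))) → lam = mu))) := by
  set S := cyclo α eps rho 0
  set D := fun i : Fin (e / eps) => cyclo α e f (eps * (i : ℕ))
  have hq1 : 1 < q := hq ▸ Fintype.one_lt_card
  have hrho0 : 0 < rho := Nat.pos_of_ne_zero (by rintro rfl; omega)
  have hf0 : 0 < f := Nat.pos_of_ne_zero (by rintro rfl; omega)
  have he0 : 0 < e := Nat.pos_of_ne_zero (by rintro rfl; omega)
  have hα0 : α ≠ 0 := hα.ne_zero (by nlinarith)
  have hord : orderOf α = eps * rho := by rw [hα.orderOf_eq hα0, hq]; omega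
  have hordf : orderOf α = e * f := by rw [hord]; omega
  have h1S : (1 : F) ∈ S := one_mem_cyclo_zero hrho0
  have hαS : α ∉ S := by simpa using pow_notMem_cyclo_zero hα hord hrho0 one_ne_zero heps
  have hUS : famU D ⊆ S := famU_cyclo_subset_cyclo_zero hα hord hrho0 hepse
  have h1U : (1 : F) ∈ famU D :=
    one_mem_famU_cyclo (Nat.div_pos (Nat.le_of_dvd he0 hepse) (by omega)) hf0
  refine ⟨fun hmod => ?_, fun hmod hepsEven => ?_⟩
  · have hρ : Even rho := even_of_mul_add_one_mod_two_mul_eq_one (by omega) (herho ▸ hmod)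
    have h2 : Function.Injective fun a : F => a + a := add_self_injective <| Ring.two_ne_zero <|
      ringChar_ne_two_of_odd_card (hq ▸ herho ▸ (hρ.mul_left eps).add_one)
    have hSpar {lam mu} (hP : IsPDS q rho lam mu S) : DoublingParity S lam mu :=
      hP.doublingParity (fun a => neg_mem_cyclo hα hord hρ) h2
    have hUpar {lam mu} (hf : Even f) (hD : IsDPDF q (e / eps) f lam mu D) :
        DoublingParity (famU D) lam mu :=
      hD.doublingParity (fun i a => neg_mem_cyclo hα hordf hf) h2
    have h2S {U : Finset F} {lam mu} (hUS : U ⊆ S) (h1U : 1 ∈ U) (hpar : DoublingParity U lam mu)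
        (h2eps : 2 < eps) : (2 : F) ∈ S ∧ (-2 : F) ∈ S :=
      have h2S := two_mem_cyclo_zero_of_parity hα hα0 hord hrho0 h2eps hUS h1U hpar
      ⟨h2S, neg_mem_cyclo hα hord hρ h2S⟩
    exact ⟨fun lam mu hP => (hSpar hP).lam_ne_mu one_ne_zero h1S hα0 hαS,
      fun hf lam mu hD => (hUpar hf hD).lam_ne_mu one_ne_zero h1U hα0 (notMem_mono hUS hαS),
      fun h2eps lam mu hP => h2S subset_rfl h1S (hSpar hP) h2eps,
      fun h2eps hf lam mu hD => h2S hUS h1U (hUpar hf hD) h2eps⟩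
  · have hρ : Odd rho := odd_of_mul_add_one_mod_two_mul_eq_add_one (by omega) (herho ▸ hmod)
    have hm1S : (-1 : F) ∉ S := neg_one_notMem_cyclo_zero hα hord hρ <|
      ringChar_ne_two_of_odd_card (hq ▸ herho ▸ (hepsEven.mul_right rho).add_one)
    exact ⟨fun lam mu hP => hP.lam_eq_mu_of_neg_notMem h1S hm1S,
      fun _ lam mu hD => hD.lam_eq_mu_of_neg_notMem h1U (notMem_mono hUS hm1S)⟩

/-- Corollary: let `q = ef+1 = ερ+1` be a prime power with `ε ∣ e`.
(a) If `q ≡ 1 (mod 2ε)`: (i) any PDS `C₀^ε` is proper; (ii) if `f` is even, any DPDF `C₀^ε′`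
is proper; for `ε > 2`: (iii) if `C₀^ε` is a PDS then `±2 ∈ C₀^ε`; (iv) if `f` is even and
`C₀^ε′` is a DPDF then `±2 ∈ C₀^ε`.
(b) If `q ≡ ε+1 (mod 2ε)` and `ε` is even: (i) `C₀^ε` cannot be a proper PDS; (ii) if `ε < e`
then `C₀^ε′` cannot be a proper DPDF. -/
theorem proper_pds_dpdf_congruence_conditions {F : Type*} [Field F] [Fintype F] [DecidableEq F]
    (q e f eps rho : ℕ) (α : F)
    (hq : Fintype.card F = q) (hα : IsPrimitiveElt α)
    (hef : q = e * f + 1) (he : 1 < e) (hf : 1 < f)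
    (herho : q = eps * rho + 1) (hepse : eps ∣ e) (heps : 1 < eps) (hrho : 1 < rho) :
    (q % (2 * eps) = 1 →
      ((∀ lam mu : ℤ, IsPDS q rho lam mu (cyclo α eps rho 0) → lam ≠ mu) ∧
       (Even f → ∀ lam mu : ℤ,
          IsDPDF q (e / eps) f lam mu
            (fun i : Fin (e / eps) => cyclo α e f (eps * (i : ℕ))) → lam ≠ mu) ∧
       (2 < eps → ∀ lam mu : ℤ, IsPDS q rho lam mu (cyclo α eps rho 0) →
          (2 : F) ∈ cyclo α eps rho 0 ∧ (-2 : F) ∈ cyclo α eps rho 0) ∧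
       (2 < eps → Even f → ∀ lam mu : ℤ,
          IsDPDF q (e / eps) f lam mu
            (fun i : Fin (e / eps) => cyclo α e f (eps * (i : ℕ))) →
          (2 : F) ∈ cyclo α eps rho 0 ∧ (-2 : F) ∈ cyclo α eps rho 0))) ∧
    (q % (2 * eps) = eps + 1 → Even eps →
      ((∀ lam mu : ℤ, IsPDS q rho lam mu (cyclo α eps rho 0) → lam = mu) ∧
       (eps < e → ∀ lam mu : ℤ,
          IsDPDF q (e / eps) f lam mu
            (fun i : Fin (e / eps) => cyclo α e f (eps * (i : ℕ))) → lam = mu))) :=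
  proper_pds_dpdf_congruence_conditions_general q e f eps rho α hq hα hef herho hepse heps
end
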